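/- Let η₁, η₂ > 0 with η₁² - 4η₂ > 0, d₀ > 0, v₀ ∈ ℝ, and η₁ ≥ 2|v₀|/d₀. Let d̃ : [0,∞) → ℝ be twice continuously differentiable with d̃(0) = d₀, d̃'(0) = v₀, and d̃''(t) ≥ -η₁ d̃'(t) - η₂ d̃(t) for all t ≥ 0. Then d̃(t) > 0 for all t ∈ [0,∞). -/

import Mathlib

/-!
Write `d'' + η₁ d' + η₂ d = (D - l₂)(D - l₁) d`, where `l₁ ≤ l₂` are the real roots of
`r² + η₁ r + η₂`. First-order Grönwall applied to `u = d' - l₁ d` gives `u ≥ e^{l₂ t} u(0) ≥ 0`,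
since the rate condition says exactly `u(0) = v₀ - l₁ d₀ ≥ v₀ + η₁ d₀ / 2 ≥ 0`. Applied once more,
`d' ≥ l₁ d` gives `d(t) ≥ e^{l₁ t} d₀ > 0`.
-/

open Real

lemma exp_mul_mul_le_of_mul_le_deriv {f : ℝ → ℝ} {c : ℝ} (hf : Differentiable ℝ f)
    (h : ∀ t ≥ (0 : ℝ), c * f t ≤ deriv f t) {t : ℝ} (ht : 0 ≤ t) :
    exp (c * t) * f 0 ≤ f t := by
  set g : ℝ → ℝ := fun t => exp (-c * t) * f t
  have hg : ∀ x, HasDerivAt g (exp (-c * x) * (deriv f x - c * f x)) x := by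
    intro x
    have he : HasDerivAt (fun t => exp (-c * t)) (exp (-c * x) * -c) x := by
      simpa using ((hasDerivAt_id x).const_mul (-c)).exp
    exact (he.mul (hf x).hasDerivAt).congr_deriv (by ring)
  have hmono : MonotoneOn g (Set.Ici 0) := by
    refine monotoneOn_of_deriv_nonneg (convex_Ici 0)
      (fun x _ => (hg x).continuousAt.continuousWithinAt)
      (fun x _ => (hg x).differentiableAt.differentiableWithinAt) fun x hx => ?_
    rw [interior_Ici] at hx
    rw [(hg x).deriv]
    exact mul_nonneg (exp_pos _).le (sub_nonneg.mpr (h x (le_of_lt hx)))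
  have hg0t : f 0 ≤ exp (-c * t) * f t := by
    simpa [g] using hmono Set.self_mem_Ici (Set.mem_Ici.mpr ht) ht
  calc exp (c * t) * f 0 ≤ exp (c * t) * (exp (-c * t) * f t) :=
        mul_le_mul_of_nonneg_left hg0t (exp_pos _).le
    _ = f t := by rw [← mul_assoc, ← exp_add]; simp

lemma exp_mul_mul_le_of_second_order_ineq {d : ℝ → ℝ} {l₁ l₂ : ℝ} (hd : ContDiff ℝ 2 d)
    (h0 : l₁ * d 0 ≤ deriv d 0)
    (h : ∀ t ≥ (0 : ℝ), (l₁ + l₂) * deriv d t - l₁ * l₂ * d t ≤ deriv (deriv d) t)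
    {t : ℝ} (ht : 0 ≤ t) :
    exp (l₁ * t) * d 0 ≤ d t := by
  have hd' : ContDiff ℝ (1 + 1) d := hd
  obtain ⟨hd_diff, -, hdd⟩ := contDiff_succ_iff_deriv.mp hd'
  have hdd_diff : Differentiable ℝ (deriv d) := hdd.differentiable one_ne_zero
  set u : ℝ → ℝ := fun t => deriv d t - l₁ * d t
  have hu : ∀ x, HasDerivAt u (deriv (deriv d) x - l₁ * deriv d x) x := fun x =>
    (hdd_diff x).hasDerivAt.sub ((hd_diff x).hasDerivAt.const_mul l₁)
  have hu_ineq : ∀ x ≥ (0 : ℝ), l₂ * u x ≤ deriv u x := by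
    intro x hx
    rw [(hu x).deriv]
    linarith [h x hx]
  have hu_nonneg : ∀ x ≥ (0 : ℝ), 0 ≤ u x := fun x hx =>
    (mul_nonneg (exp_pos _).le (sub_nonneg.mpr h0)).trans
      (exp_mul_mul_le_of_mul_le_deriv (fun y => (hu y).differentiableAt) hu_ineq hx)
  exact exp_mul_mul_le_of_mul_le_deriv hd_diff
    (fun x hx => sub_nonneg.mp (hu_nonneg x hx)) ht

lemma exists_le_add_eq_mul_eq_of_sq_sub_four_mul_nonneg {p q : ℝ} (h : 0 ≤ p ^ 2 - 4 * q) :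
    ∃ r₁ r₂ : ℝ, r₁ ≤ r₂ ∧ r₁ + r₂ = -p ∧ r₁ * r₂ = q := by
  have hs := sq_sqrt h
  refine ⟨(-p - √(p ^ 2 - 4 * q)) / 2, (-p + √(p ^ 2 - 4 * q)) / 2, ?_, by ring, ?_⟩
  · linarith [sqrt_nonneg (p ^ 2 - 4 * q)]
  · linear_combination -hs / 4

theorem second_order_VFI_keeps_distance_positive_general
    (η₁ η₂ d₀ v₀ : ℝ)
    (hdisc : η₁ ^ 2 - 4 * η₂ > 0) (hd₀ : 0 < d₀)
    (hrate : η₁ ≥ 2 * |v₀| / d₀)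
    (d : ℝ → ℝ) (hC2 : ContDiff ℝ 2 d)
    (h0 : d 0 = d₀) (h0' : deriv d 0 = v₀)
    (hineq : ∀ t ≥ (0 : ℝ), deriv (deriv d) t ≥ -η₁ * deriv d t - η₂ * d t) :
    ∀ t ≥ (0 : ℝ), d t > 0 := by
  obtain ⟨l₁, l₂, hle, hsum, hprod⟩ := exists_le_add_eq_mul_eq_of_sq_sub_four_mul_nonneg hdisc.le
  have hv₀ : 2 * |v₀| ≤ η₁ * d₀ := (div_le_iff₀ hd₀).mp hrate
  have hinit : l₁ * d 0 ≤ deriv d 0 := by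
    rw [h0, h0']
    nlinarith [neg_abs_le v₀]
  intro t ht
  calc 0 < exp (l₁ * t) * d 0 := mul_pos (exp_pos _) (h0 ▸ hd₀)
    _ ≤ d t := exp_mul_mul_le_of_second_order_ineq hC2 hinit
        (fun x hx => by rw [hsum, hprod]; linarith [hineq x hx]) ht

theorem second_order_VFI_keeps_distance_positive
    (η₁ η₂ d₀ v₀ : ℝ) (hη₁ : 0 < η₁) (hη₂ : 0 < η₂)
    (hdisc : η₁ ^ 2 - 4 * η₂ > 0) (hd₀ : 0 < d₀)
    (hrate : η₁ ≥ 2 * |v₀| / d₀)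
    (d : ℝ → ℝ) (hC2 : ContDiff ℝ 2 d)
    (h0 : d 0 = d₀) (h0' : deriv d 0 = v₀)
    (hineq : ∀ t ≥ (0 : ℝ), deriv (deriv d) t ≥ -η₁ * deriv d t - η₂ * d t) :
    ∀ t ≥ (0 : ℝ), d t > 0 :=
  second_order_VFI_keeps_distance_positive_general η₁ η₂ d₀ v₀ hdisc hd₀ hrate d hC2 h0 h0' hineq
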